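/- Let (a,b) be a matching pair in L^∞(ℝ) with subordinated pair (c,d). Then the following operator identity holds on L²(ℝ⁺): (W(a) + H(b)) ∘ H(a⁻¹) = W(d) − (W(b) + H(a)) ∘ W(ã⁻¹). -/

import Mathlib

open MeasureTheory Complex Filter Set

noncomputable section

namespace WienerHopf

/-- The space `L²(ℝ;ℂ)`. -/
abbrev L2 : Type := Lp ℂ 2 (volume : Measure ℝ)

open Classical in
/-- Multiplication by a function `a : ℝ → ℂ`, as a bounded operator on `L²(ℝ)`.
(It is defined to be `0` in the degenerate case where `a` is not essentially bounded.) -/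
def mul (a : ℝ → ℂ) : L2 →L[ℂ] L2 :=
  if h : MemLp a ⊤ (volume : Measure ℝ) then
    LinearMap.mkContinuous
      { toFun := fun f => (MemLp.smul (p := ⊤) (r := 2) (Lp.memLp f) h).toLp (a • (f : ℝ → ℂ))
        map_add' := by
          intro f g
          rw [← MemLp.toLp_add]
          apply Lp.ext
          filter_upwards [MemLp.coeFn_toLp (MemLp.smul (p := ⊤) (r := 2) (Lp.memLp (f + g)) h),
            MemLp.coeFn_toLp ((MemLp.smul (p := ⊤) (r := 2) (Lp.memLp f) h).add
              (MemLp.smul (p := ⊤) (r := 2) (Lp.memLp g) h)),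
            Lp.coeFn_add f g] with t h1 h2 h3
          rw [h1, h2]
          simp only [Pi.smul_apply, smul_eq_mul, Pi.mul_apply, Pi.add_apply]
          rw [h3]
          simp [Pi.add_apply, mul_add]
        map_smul' := by
          intro m f
          simp only [RingHom.id_apply]
          rw [← MemLp.toLp_const_smul]
          apply Lp.ext
          filter_upwards [MemLp.coeFn_toLp (MemLp.smul (p := ⊤) (r := 2) (Lp.memLp (m • f)) h),
            MemLp.coeFn_toLp ((MemLp.smul (p := ⊤) (r := 2) (Lp.memLp f) h).const_smul m),
            Lp.coeFn_smul m f] with t h1 h2 h3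
          rw [h1, h2]
          simp only [Pi.smul_apply, smul_eq_mul, Pi.mul_apply]
          rw [h3]
          simp only [Pi.smul_apply, smul_eq_mul]
          ring
        }
      (eLpNorm a ⊤ (volume : Measure ℝ)).toReal
      (by
        intro f
        simp only [LinearMap.coe_mk, AddHom.coe_mk]
        rw [Lp.norm_toLp, Lp.norm_def]
        have hle := eLpNorm_smul_le_mul_eLpNorm (Lp.aestronglyMeasurable f) h.1
          (p := ⊤) (q := 2) (r := 2)
        calc (eLpNorm (a • (f : ℝ → ℂ)) 2 (volume : Measure ℝ)).toReal
            ≤ (eLpNorm a ⊤ (volume : Measure ℝ) * eLpNorm (f : ℝ → ℂ) 2 volume).toReal := by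
              apply ENNReal.toReal_mono _ hle
              exact ENNReal.mul_ne_top h.2.ne (Lp.eLpNorm_lt_top f).ne
          _ = (eLpNorm a ⊤ (volume : Measure ℝ)).toReal *
              (eLpNorm (f : ℝ → ℂ) 2 (volume : Measure ℝ)).toReal := ENNReal.toReal_mul)
  else 0

theorem mul_coeFn {a : ℝ → ℂ} (h : MemLp a ⊤ (volume : Measure ℝ)) (f : L2) :
    (mul a f : ℝ → ℂ) =ᵐ[volume] fun t => a t * f t := by
  rw [mul, dif_pos h]
  show ⇑((MemLp.smul (p := ⊤) (r := 2) (Lp.memLp f) h).toLp (a • (f : ℝ → ℂ))) =ᵐ[volume]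
    fun t => a t * f t
  exact (MemLp.coeFn_toLp _).trans
    (Eventually.of_forall fun t => by simp [Pi.smul_apply])

/-- `(-t)`-reflection is measure preserving. -/
theorem negMP : MeasurePreserving (fun t : ℝ => -t) volume volume :=
  Measure.measurePreserving_neg (volume : Measure ℝ)

/-- The reflection operator `(Jφ)(t) = φ(-t)` on `L²(ℝ)`. -/
def reflect : L2 →L[ℂ] L2 :=
  LinearMap.mkContinuous
    { toFun := ⇑(Lp.compMeasurePreserving (fun t : ℝ => -t) negMP)
      map_add' := fun f g => map_add _ f g
      map_smul' := by
        intro m g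
        simp only [RingHom.id_apply]
        apply Lp.ext
        filter_upwards [Lp.coeFn_compMeasurePreserving (f := fun t : ℝ => -t) (m • g) negMP,
          Lp.coeFn_smul m (Lp.compMeasurePreserving (fun t : ℝ => -t) negMP g),
          Lp.coeFn_compMeasurePreserving (f := fun t : ℝ => -t) g negMP,
          negMP.quasiMeasurePreserving.ae_eq_comp (Lp.coeFn_smul m g)] with t h1 h2 h3 h4
        rw [h1, h2, h4]
        simp only [Function.comp_apply, Pi.smul_apply, smul_eq_mul]
        rw [h3]
        simp only [Function.comp_apply]
      }
    1
    (by
      intro g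
      rw [one_mul]
      exact le_of_eq (Lp.norm_compMeasurePreserving g _))

theorem reflect_coeFn (g : L2) :
    (reflect g : ℝ → ℂ) =ᵐ[volume] fun t => g (-t) :=
  Lp.coeFn_compMeasurePreserving (f := fun t : ℝ => -t) g negMP

/-- The indicator function of `(0,∞)`. -/
def chiPlus : ℝ → ℂ := Set.indicator (Set.Ioi (0 : ℝ)) (fun _ => 1)

theorem chiPlus_memℒp : MemLp chiPlus ⊤ (volume : Measure ℝ) :=
  (memLp_top_const (1 : ℂ)).indicator measurableSet_Ioi

/-- The subspace of `L²(ℝ)` consisting of functions vanishing a.e. on `(-∞,0)`;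
it is identified with `L²(ℝ⁺)`. -/
def posSubspace : Submodule ℂ L2 where
  carrier := {f : L2 | ∀ᵐ t : ℝ ∂volume, t < 0 → (f : ℝ → ℂ) t = 0}
  zero_mem' := by
    filter_upwards [Lp.coeFn_zero ℂ 2 (volume : Measure ℝ)] with t ht _
    simp [ht]
  add_mem' := by
    intro f g hf hg
    filter_upwards [hf, hg, Lp.coeFn_add f g] with t h1 h2 h3 hlt
    rw [h3]
    simp [Pi.add_apply, h1 hlt, h2 hlt]
  smul_mem' := by
    intro m f hf
    filter_upwards [hf, Lp.coeFn_smul m f] with t h1 h2 hlt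
    rw [h2]
    simp [Pi.smul_apply, h1 hlt]

/-- `L²(ℝ⁺)`, realized as the subspace of `L²(ℝ)` of functions vanishing a.e. on `(-∞,0)`. -/
abbrev Lp2Plus : Type := ↥posSubspace

theorem chiPlus_mul_mem (g : L2) : mul chiPlus g ∈ posSubspace := by
  filter_upwards [mul_coeFn chiPlus_memℒp g] with t ht hlt
  rw [ht, chiPlus, Set.indicator_of_notMem (by simpa using hlt.le), zero_mul]

/-- Compression of an operator on `L²(ℝ)` to the subspace `L²(ℝ⁺)`:
`φ ↦ χ₊ ⬝ (T φ)`. -/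
def compress (T : L2 →L[ℂ] L2) : Lp2Plus →L[ℂ] Lp2Plus :=
  LinearMap.mkContinuous
    { toFun := fun φ => ⟨mul chiPlus (T φ.val), chiPlus_mul_mem _⟩
      map_add' := by intro φ ψ; apply Subtype.ext; simp
      map_smul' := by intro m φ; apply Subtype.ext; simp }
    ‖(mul chiPlus).comp T‖
    (by intro φ; exact ((mul chiPlus).comp T).le_opNorm φ.val)

theorem compress_coe (T : L2 →L[ℂ] L2) (φ : Lp2Plus) :
    (compress T φ : L2) = mul chiPlus (T φ.val) := rfl

/-- An abstract realization of the Fourier transform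
`(𝓕φ)(ξ) = ∫ e^{iξx} φ(x) dx` on `L²(ℝ)` (together with its inverse
`(𝓕⁻¹ψ)(x) = (2π)⁻¹ ∫ e^{-iξx} ψ(ξ) dξ`): a continuous linear bijection of `L²(ℝ)`
that is given by the above integral formulas on integrable functions.  By density
of `L¹ ∩ L²` in `L²`, these properties determine the operator uniquely, and by the
Fourier–Plancherel theory such an operator exists. -/
structure FourierL2 where
  equiv : L2 ≃L[ℂ] L2
  forward : ∀ φ : L2, Integrable (φ : ℝ → ℂ) volume →
      (equiv φ : ℝ → ℂ) =ᵐ[volume]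
        fun ξ : ℝ => ∫ x : ℝ, Complex.exp (Complex.I * ξ * x) * φ x
  inverse : ∀ ψ : L2, Integrable (ψ : ℝ → ℂ) volume →
      (equiv.symm ψ : ℝ → ℂ) =ᵐ[volume]
        fun x : ℝ => (2 * Real.pi : ℂ)⁻¹ * ∫ ξ : ℝ, Complex.exp (-(Complex.I * ξ * x)) * ψ ξ

/-- `W⁰(a) = 𝓕⁻¹ M_a 𝓕`, the convolution (Fourier multiplier) operator on `L²(ℝ)`. -/
def W0 (F : FourierL2) (a : ℝ → ℂ) : L2 →L[ℂ] L2 :=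
  (F.equiv.symm : L2 →L[ℂ] L2).comp ((mul a).comp (F.equiv : L2 →L[ℂ] L2))

/-- The Wiener–Hopf operator `W(a) = χ₊ W⁰(a)` on `L²(ℝ⁺)`. -/
def W (F : FourierL2) (a : ℝ → ℂ) : Lp2Plus →L[ℂ] Lp2Plus :=
  compress (W0 F a)

/-- The Hankel operator `H(b) = χ₊ W⁰(b) J` on `L²(ℝ⁺)`. -/
def H (F : FourierL2) (b : ℝ → ℂ) : Lp2Plus →L[ℂ] Lp2Plus :=
  compress ((W0 F b).comp reflect)

/-- `a` is invertible in the Banach algebra `L^∞(ℝ)`: `a ∈ L^∞`, `a ≠ 0` a.e.,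
and the pointwise inverse `a⁻¹` again belongs to `L^∞`. -/
def InvertibleLinf (a : ℝ → ℂ) : Prop :=
  MemLp a ⊤ (volume : Measure ℝ) ∧ (∀ᵐ t : ℝ ∂volume, a t ≠ 0) ∧
    MemLp (fun t => (a t)⁻¹) ⊤ (volume : Measure ℝ)

/-- `(a,b)` is a matching pair: `a, b` are invertible in `L^∞(ℝ)` and
`a(t)a(-t) = b(t)b(-t)` for a.e. `t`. -/
def MatchingPair (a b : ℝ → ℂ) : Prop :=
  InvertibleLinf a ∧ InvertibleLinf b ∧
    ∀ᵐ t : ℝ ∂volume, a t * a (-t) = b t * b (-t)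

/-!
Everything follows from the product rules `W(uv) = W(u)W(v) + H(u)H(ṽ)` and
`H(uv) = W(u)H(v) + H(u)W(ṽ)`. They hold because `W⁰` is multiplicative, `W⁰(ṽ) J = J W⁰(v)`
(the Fourier transform commutes with `J`), and `χ₊ + χ₋ = 1` with `J χ₊ J = χ₋`.
With `u = a`, `v = a⁻¹` the second rule gives `W(a)H(a⁻¹) + H(a)W(ã⁻¹) = H(1) = 0`; with
`u = b`, `v = ã⁻¹` the first gives `W(b)W(ã⁻¹) + H(b)H(a⁻¹) = W(b ã⁻¹)`, and the matching
condition says exactly that `b ã⁻¹ = d`.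
-/

theorem memLp_comp_neg {p : ENNReal} {v : ℝ → ℂ} (hv : MemLp v p (volume : Measure ℝ)) :
    MemLp (fun t => v (-t)) p (volume : Measure ℝ) :=
  hv.comp_measurePreserving negMP

section Multiplication

variable {u v : ℝ → ℂ}

theorem mul_congr_ae (hu : MemLp u ⊤ (volume : Measure ℝ)) (h : u =ᵐ[volume] v) :
    mul u = mul v := by
  refine ContinuousLinearMap.ext fun f => Lp.ext ?_
  filter_upwards [mul_coeFn hu f, mul_coeFn (hu.ae_eq h) f, h] with t h1 h2 h3
  rw [h1, h2, h3]

theorem mul_comp_mul (hu : MemLp u ⊤ (volume : Measure ℝ))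
    (hv : MemLp v ⊤ (volume : Measure ℝ)) :
    (mul u).comp (mul v) = mul (fun t => u t * v t) := by
  refine ContinuousLinearMap.ext fun f => Lp.ext ?_
  filter_upwards [mul_coeFn hu (mul v f), mul_coeFn hv f, mul_coeFn (hv.mul' hu) f]
    with t h1 h2 h3
  rw [ContinuousLinearMap.comp_apply, h1, h2, h3, mul_assoc]

theorem mul_const_one : mul (fun _ : ℝ => (1 : ℂ)) = ContinuousLinearMap.id ℂ L2 := by
  refine ContinuousLinearMap.ext fun f => Lp.ext ?_
  filter_upwards [mul_coeFn (memLp_top_const (1 : ℂ)) f] with t h1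
  rw [h1, one_mul, ContinuousLinearMap.id_apply]

theorem reflect_reflect (f : L2) : reflect (reflect f) = f := by
  refine Lp.ext ?_
  filter_upwards [reflect_coeFn (reflect f),
    negMP.quasiMeasurePreserving.ae_eq (reflect_coeFn f)] with t h1 h2
  rw [h1]
  simpa using h2

theorem mul_reflect (hv : MemLp v ⊤ (volume : Measure ℝ)) (f : L2) :
    mul v (reflect f) = reflect (mul (fun t => v (-t)) f) := by
  refine Lp.ext ?_
  filter_upwards [mul_coeFn hv (reflect f), reflect_coeFn f,
    reflect_coeFn (mul (fun t => v (-t)) f),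
    negMP.quasiMeasurePreserving.ae_eq (mul_coeFn (memLp_comp_neg hv) f)] with t h1 h2 h3 h4
  rw [h1, h2, h3]
  simpa using h4.symm

end Multiplication

def chiMinus : ℝ → ℂ := Set.indicator (Set.Iio (0 : ℝ)) (fun _ => 1)

theorem chiMinus_memLp : MemLp chiMinus ⊤ (volume : Measure ℝ) :=
  (memLp_top_const (1 : ℂ)).indicator measurableSet_Iio

theorem chiPlus_comp_neg : (fun t : ℝ => chiPlus (-t)) = chiMinus := by
  funext t
  simp only [chiMinus, chiPlus, Set.indicator_apply, Set.mem_Iio, Set.mem_Ioi, neg_pos]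

theorem mul_chiPlus_add_mul_chiMinus (f : L2) : mul chiPlus f + mul chiMinus f = f := by
  refine Lp.ext ?_
  filter_upwards [mul_coeFn chiPlus_memℒp f, mul_coeFn chiMinus_memLp f,
    Lp.coeFn_add (mul chiPlus f) (mul chiMinus f), Measure.ae_ne volume 0] with t h1 h2 h3 ht
  rw [h3, Pi.add_apply, h1, h2, ← add_mul]
  rcases ht.lt_or_gt with ht | ht <;> simp [chiPlus, chiMinus, ht, ht.not_gt]

theorem mul_chiMinus_eq_zero_of_mem {f : L2} (hf : f ∈ posSubspace) : mul chiMinus f = 0 := by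
  refine Lp.ext ?_
  filter_upwards [mul_coeFn chiMinus_memLp f, hf, Lp.coeFn_zero ℂ 2 (volume : Measure ℝ)]
    with t h1 h2 h3
  rw [h1, h3]
  by_cases ht : t < 0
  · simp [h2 ht]
  · simp [chiMinus, ht]

theorem mul_chiPlus_reflect (f : L2) : mul chiPlus (reflect f) = reflect (mul chiMinus f) := by
  rw [mul_reflect chiPlus_memℒp, chiPlus_comp_neg]

theorem Lp.simpleFunc.integrable_coe {α E : Type*} [MeasurableSpace α] {μ : Measure α}
    [NormedAddCommGroup E] {p : ENNReal} (hp0 : p ≠ 0) (hp : p ≠ ⊤) (s : Lp.simpleFunc E p μ) :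
    Integrable ((s : Lp E p μ) : α → E) μ :=
  ((SimpleFunc.memLp_iff_integrable hp0 hp).mp (Lp.simpleFunc.memLp s)).congr
    (Lp.simpleFunc.toSimpleFunc_eq_toFun s)

theorem Lp.continuous_ext_of_integrable {α E Y : Type*} [MeasurableSpace α] {μ : Measure α}
    [NormedAddCommGroup E] {p : ENNReal} [Fact (1 ≤ p)] (hp : p ≠ ⊤)
    [TopologicalSpace Y] [T2Space Y] {f g : Lp E p μ → Y} (hf : Continuous f) (hg : Continuous g)
    (h : ∀ φ : Lp E p μ, Integrable (φ : α → E) μ → f φ = g φ) : f = g :=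
  (Lp.simpleFunc.denseRange hp).equalizer hf hg <| funext fun s =>
    h s (Lp.simpleFunc.integrable_coe (zero_lt_one.trans_le Fact.out).ne' hp s)

section Fourier

variable (F : FourierL2)

theorem FourierL2.apply_reflect_of_integrable {g : L2} (hg : Integrable (g : ℝ → ℂ) volume) :
    F.equiv (reflect g) = reflect (F.equiv g) := by
  have hrg : Integrable (reflect g : ℝ → ℂ) volume :=
    ((negMP.integrable_comp hg.aestronglyMeasurable).mpr hg).congr (reflect_coeFn g).symm
  refine Lp.ext ?_
  filter_upwards [F.forward (reflect g) hrg,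
    negMP.quasiMeasurePreserving.ae_eq (F.forward g hg), reflect_coeFn (F.equiv g)]
    with ξ h1 h2 h3
  rw [h1, h3]
  refine (integral_congr_ae ?_).trans
    ((integral_neg_eq_self (fun x : ℝ => exp (I * ↑(-ξ) * x) * g x) volume).trans h2.symm)
  filter_upwards [reflect_coeFn g] with x hx
  rw [hx]
  push_cast
  ring_nf

theorem FourierL2.apply_reflect (g : L2) : F.equiv (reflect g) = reflect (F.equiv g) :=
  congrFun (Lp.continuous_ext_of_integrable (f := fun g => F.equiv (reflect g))
    (g := fun g => reflect (F.equiv g)) (by norm_num) (by fun_prop) (by fun_prop)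
    fun _ => F.apply_reflect_of_integrable) g

theorem FourierL2.symm_apply_reflect (g : L2) :
    F.equiv.symm (reflect g) = reflect (F.equiv.symm g) := by
  rw [F.equiv.symm_apply_eq, F.apply_reflect, F.equiv.apply_symm_apply]

variable {u v : ℝ → ℂ}

theorem W0_congr_ae (hu : MemLp u ⊤ (volume : Measure ℝ)) (h : u =ᵐ[volume] v) :
    W0 F u = W0 F v := by
  rw [W0, W0, mul_congr_ae hu h]

theorem W0_mul (hu : MemLp u ⊤ (volume : Measure ℝ)) (hv : MemLp v ⊤ (volume : Measure ℝ)) :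
    W0 F (fun t => u t * v t) = (W0 F u).comp (W0 F v) := by
  refine ContinuousLinearMap.ext fun g => ?_
  simp [W0, ← mul_comp_mul hu hv]

theorem W0_one : W0 F (fun _ => 1) = ContinuousLinearMap.id ℂ L2 := by
  refine ContinuousLinearMap.ext fun g => ?_
  simp [W0, mul_const_one]

theorem W0_comp_neg_reflect (hv : MemLp v ⊤ (volume : Measure ℝ)) (g : L2) :
    W0 F (fun t => v (-t)) (reflect g) = reflect (W0 F v g) := by
  simp only [W0, ContinuousLinearMap.comp_apply, ContinuousLinearEquiv.coe_coe,
    F.apply_reflect, mul_reflect (memLp_comp_neg hv), neg_neg, F.symm_apply_reflect]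

end Fourier

def projPlus (g : L2) : Lp2Plus := ⟨mul chiPlus g, chiPlus_mul_mem g⟩

section WienerHopfHankel

variable (F : FourierL2) {u v : ℝ → ℂ}

theorem W_apply (φ : Lp2Plus) : W F u φ = projPlus (W0 F u φ) := rfl

theorem H_apply (φ : Lp2Plus) : H F u φ = projPlus (W0 F u (reflect φ)) := rfl

theorem W_projPlus_add_H_projPlus_reflect (g : L2) :
    W F u (projPlus g) + H F u (projPlus (reflect g)) = projPlus (W0 F u g) := by
  refine Subtype.ext ?_
  have hJPJ : reflect (mul chiPlus (reflect g)) = mul chiMinus g := by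
    rw [mul_chiPlus_reflect, reflect_reflect]
  simp only [W_apply, H_apply, projPlus, Submodule.coe_add, hJPJ, ← map_add,
    mul_chiPlus_add_mul_chiMinus]

theorem W_comp_W_add_H_comp_H (hu : MemLp u ⊤ (volume : Measure ℝ))
    (hv : MemLp v ⊤ (volume : Measure ℝ)) :
    (W F u).comp (W F v) + (H F u).comp (H F (fun t => v (-t))) =
      W F (fun t => u t * v t) := by
  refine ContinuousLinearMap.ext fun φ => ?_
  rw [add_apply, ContinuousLinearMap.comp_apply,
    ContinuousLinearMap.comp_apply, W_apply F (φ := φ), H_apply F (φ := φ),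
    W0_comp_neg_reflect F hv, W_projPlus_add_H_projPlus_reflect, W_apply, W0_mul F hu hv,
    ContinuousLinearMap.comp_apply]

theorem W_comp_H_add_H_comp_W (hu : MemLp u ⊤ (volume : Measure ℝ))
    (hv : MemLp v ⊤ (volume : Measure ℝ)) :
    (W F u).comp (H F v) + (H F u).comp (W F (fun t => v (-t))) =
      H F (fun t => u t * v t) := by
  refine ContinuousLinearMap.ext fun φ => ?_
  -- writing `φ = J (J φ)` turns `W⁰(ṽ) φ` into `J W⁰(v) J φ`
  rw [add_apply, ContinuousLinearMap.comp_apply,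
    ContinuousLinearMap.comp_apply, H_apply F (φ := φ), W_apply F (φ := φ),
    ← reflect_reflect (φ : L2), W0_comp_neg_reflect F hv, reflect_reflect,
    W_projPlus_add_H_projPlus_reflect, H_apply, W0_mul F hu hv, ContinuousLinearMap.comp_apply]

theorem H_one : H F (fun _ => 1) = 0 := by
  refine ContinuousLinearMap.ext fun φ => Subtype.ext ?_
  change mul chiPlus (W0 F (fun _ => 1) (reflect φ)) = 0
  rw [W0_one, ContinuousLinearMap.id_apply, mul_chiPlus_reflect, mul_chiMinus_eq_zero_of_mem φ.2,
    map_zero]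

end WienerHopfHankel

theorem identity_Hankel_inverse_general
    (F : FourierL2) (a b d : ℝ → ℂ) (hab : MatchingPair a b)
    (hd : d = fun t => a t * (b (-t))⁻¹) :
    (W F a + H F b).comp (H F (fun t => (a t)⁻¹)) =
      W F d - (W F b + H F a).comp (W F (fun t => (a (-t))⁻¹)) := by
  obtain ⟨⟨ha, ha_ne, ha_inv⟩, ⟨hb, hb_ne, -⟩, hmatch⟩ := hab
  have hHankel : (W F a).comp (H F (fun t => (a t)⁻¹)) +
      (H F a).comp (W F (fun t => (a (-t))⁻¹)) = 0 := by
    have h_one : (fun t => a t * (a t)⁻¹) =ᵐ[volume] fun _ => (1 : ℂ) := by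
      filter_upwards [ha_ne] with t ht
      exact mul_inv_cancel₀ ht
    rw [W_comp_H_add_H_comp_W F ha ha_inv, H, W0_congr_ae F (ha_inv.mul' ha) h_one, ← H, H_one]
  have hToeplitz : (W F b).comp (W F (fun t => (a (-t))⁻¹)) +
      (H F b).comp (H F (fun t => (a t)⁻¹)) = W F d := by
    have h_d : (fun t => b t * (a (-t))⁻¹) =ᵐ[volume] d := by
      filter_upwards [hmatch, negMP.quasiMeasurePreserving.ae ha_ne,
        negMP.quasiMeasurePreserving.ae hb_ne] with t hm han hbn
      rw [hd]
      field_simp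
      linear_combination -hm
    have h := W_comp_W_add_H_comp_H F hb (memLp_comp_neg ha_inv)
    simp only [neg_neg] at h
    rw [h, W, W0_congr_ae F ((memLp_comp_neg ha_inv).mul' hb) h_d, ← W]
  rw [ContinuousLinearMap.add_comp, ContinuousLinearMap.add_comp, ← hToeplitz,
    eq_neg_of_add_eq_zero_left hHankel]
  abel

/-- For a matching pair `(a,b)` with subordinated pair `(c,d)`:
`(W(a) + H(b)) H(a⁻¹) = W(d) - (W(b) + H(a)) W(ã⁻¹)`. -/
theorem identity_Hankel_inverse
    (F : FourierL2) (a b c d : ℝ → ℂ) (hab : MatchingPair a b)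
    (hc : c = fun t => a t * (b t)⁻¹) (hd : d = fun t => a t * (b (-t))⁻¹) :
    (W F a + H F b).comp (H F (fun t => (a t)⁻¹)) =
      W F d - (W F b + H F a).comp (W F (fun t => (a (-t))⁻¹)) :=
  identity_Hankel_inverse_general F a b d hab hd

end WienerHopf
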